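/- arXiv:2408.14327 — 2 statements merged into one kernel-verified Lean document; each statement's English description precedes it below -/
import Mathlib

section
/- Let G be the pushforward of the symmetric Dirichlet distribution Dir_K(α) under the map L(β) = Σ_{k=1}^K β_k θ_k, where θ_1,...,θ_K ∈ Δ^{V-1} are affinely independent, so that S = conv{θ_1,...,θ_K} has dimension K−1. Then there is a constant C = C(K, α) > 0 such that for every η ∈ S and every 0 < ε < 1/K: G(B(η, ε) ∩ S) ≥ C ε^{K−1} if α ≤ 1, and G(B(η, ε) ∩ S) ≥ C ε^{αK−1} if α > 1. -/
/-!
Realize `Dir_K(α)` as the normalization `g / ∑ g` of i.i.d. Gamma(α, 1) variables `g`, and write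
`η = ∑ a_k θ_k` with barycentric weights `a`. Every `g` in a box `∏_k [t a_k, t (a_k + δ))`
normalizes to a point within `K² δ` of `η`, whatever the scale `t`. Take `δ ≍ ε` and the scales
`t = (1 + K δ)^n` for `n < N ≍ 1 / ε`: these boxes are pairwise disjoint, because a coordinate
with `a_k ≥ 1 / K` separates them, and they lie in `[0, 4]^K`, where the Gamma density is at least
a multiple of `x^(α - 1)`. So each box has mass `≳ δ^(max(α, 1) K)`, and the `N` boxes together
give `ε^(max(α, 1) K - 1)`.
-/

open MeasureTheory ProbabilityTheory

/-- The symmetric Dirichlet distribution `Dir_K(α)` on the simplex, realized as the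
pushforward of a vector of i.i.d. Gamma(α,1) random variables under normalization. -/
noncomputable def dirichletSym (K : ℕ) (α : ℝ) : Measure (Fin K → ℝ) :=
  Measure.map (fun g k => g k / ∑ j, g j)
    (Measure.pi fun _ : Fin K => gammaMeasure α 1)

open Set Real Function

lemma min_mul_rpow_le_rpow {α x y : ℝ} (hy : 0 < y) (hyx : y ≤ x) (hx : x ≤ 4) :
    min ((4 : ℝ) ^ (α - 1)) 1 * y ^ (max α 1 - 1) ≤ x ^ (α - 1) := by
  rcases le_or_gt α 1 with h | h
  · rw [max_eq_right h, sub_self, rpow_zero, mul_one]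
    exact (min_le_left _ _).trans (rpow_le_rpow_of_nonpos (hy.trans_le hyx) hx (by linarith))
  · rw [max_eq_left h.le]
    exact (mul_le_of_le_one_left (by positivity) (min_le_right _ _)).trans
      (rpow_le_rpow hy.le hyx (by linarith))

lemma exists_gammaMeasure_Ico_ge {α : ℝ} (hα : 0 < α) :
    ∃ c > 0, ∀ u w : ℝ, 0 ≤ u → 0 < w → u + w ≤ 4 →
      ENNReal.ofReal (c * w ^ max α 1) ≤ gammaMeasure α 1 (Ico u (u + w)) := by
  set A := min ((4 : ℝ) ^ (α - 1)) 1
  have hA : 0 < A := lt_min (by positivity) one_pos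
  have hΓ := Gamma_pos_of_pos hα
  refine ⟨(Gamma α)⁻¹ * A * exp (-4) / 2 ^ max α 1, by positivity, fun u w hu hw huw => ?_⟩
  set D := (Gamma α)⁻¹ * (A * (w / 2) ^ (max α 1 - 1)) * exp (-4)
  -- the density is bounded below on the right half of the interval, where `x ≥ w / 2`
  have hdens : ∀ x ∈ Ico (u + w / 2) (u + w), ENNReal.ofReal D ≤ gammaPDF α 1 x := by
    rintro x ⟨hx₁, hx₂⟩
    have hx : 0 < x := by linarith
    rw [gammaPDF_of_nonneg hx.le, one_rpow, one_div, one_mul]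
    refine ENNReal.ofReal_le_ofReal ?_
    gcongr (Gamma α)⁻¹ * ?_ * exp ?_
    · exact min_mul_rpow_le_rpow (by positivity) (by linarith) (by linarith)
    · linarith
  have hD : (Gamma α)⁻¹ * A * exp (-4) / 2 ^ max α 1 * w ^ max α 1 = D * (w / 2) := by
    have hw2 : 0 < w / 2 := by positivity
    simp only [D]
    rw [rpow_sub_one hw2.ne', div_rpow hw.le zero_le_two]
    field_simp
  rw [gammaMeasure, withDensity_apply _ measurableSet_Ico]
  calc ENNReal.ofReal ((Gamma α)⁻¹ * A * exp (-4) / 2 ^ max α 1 * w ^ max α 1)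
      = ∫⁻ _ in Ico (u + w / 2) (u + w), ENNReal.ofReal D := by
        rw [setLIntegral_const, volume_Ico, ← ENNReal.ofReal_mul (by positivity), hD]
        congr 2
        ring
    _ ≤ ∫⁻ x in Ico (u + w / 2) (u + w), gammaPDF α 1 x :=
        setLIntegral_mono (measurable_gammaPDFReal α 1).ennreal_ofReal hdens
    _ ≤ ∫⁻ x in Ico u (u + w), gammaPDF α 1 x :=
        lintegral_mono_set (Ico_subset_Ico_left (by linarith))

lemma one_add_pow_le_two {x : ℝ} (hx : 0 ≤ x) {n : ℕ} (hn : n * x ≤ 1 / 2) :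
    (1 + x) ^ n ≤ 2 := by
  have he : exp (1 / 2) < 2 := lt_of_pow_lt_pow_left₀ 2 zero_le_two <| by
    rw [← exp_nat_mul]
    norm_num
    linarith [exp_one_lt_d9]
  calc (1 + x) ^ n ≤ exp x ^ n := by gcongr; linarith [add_one_le_exp x]
    _ = exp (n * x) := (exp_nat_mul x n).symm
    _ ≤ exp (1 / 2) := exp_le_exp.2 hn
    _ ≤ 2 := he.le

lemma EuclideanSpace.norm_le_one_of_nonneg_of_sum_eq_one {ι : Type*} [Fintype ι]
    {x : EuclideanSpace ℝ ι} (h₀ : ∀ i, 0 ≤ x i) (h₁ : ∑ i, x i = 1) : ‖x‖ ≤ 1 := by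
  rw [EuclideanSpace.norm_eq, sqrt_le_one, ← h₁]
  refine Finset.sum_le_sum fun i _ => ?_
  rw [norm_eq_abs, sq_abs, sq]
  exact mul_le_of_le_one_left (h₀ i)
    (h₁ ▸ Finset.single_le_sum (fun j _ => h₀ j) (Finset.mem_univ i))

lemma dist_sum_smul_le {ι E : Type*} [Fintype ι] [SeminormedAddCommGroup E] [NormedSpace ℝ E]
    {a b : ι → ℝ} {v : ι → E} {ρ : ℝ} (hab : ∀ k, |b k - a k| ≤ ρ) (hv : ∀ k, ‖v k‖ ≤ 1) :
    dist (∑ k, b k • v k) (∑ k, a k • v k) ≤ Fintype.card ι * ρ := by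
  rw [dist_eq_norm, ← Finset.sum_sub_distrib]
  calc ‖∑ k, (b k • v k - a k • v k)‖ ≤ ∑ k, ‖b k • v k - a k • v k‖ := norm_sum_le _ _
    _ ≤ ∑ _k : ι, ρ := Finset.sum_le_sum fun k _ => by
        rw [← sub_smul, norm_smul, norm_eq_abs]
        exact (mul_le_of_le_one_right (abs_nonneg _) (hv k)).trans (hab k)
    _ = Fintype.card ι * ρ := by simp

lemma exists_sum_smul_eq_of_mem_convexHull_range {ι E : Type*} [Fintype ι] [AddCommGroup E]
    [Module ℝ E] {v : ι → E} {x : E} (hx : x ∈ convexHull ℝ (range v)) :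
    ∃ w : ι → ℝ, (∀ k, 0 ≤ w k) ∧ ∑ k, w k = 1 ∧ ∑ k, w k • v k = x := by
  classical
  rw [convexHull_range_eq_exists_affineCombination] at hx
  obtain ⟨s, w, hw₀, hw₁, rfl⟩ := hx
  have hw₁' : ∑ i, (s : Set ι).indicator w i = 1 := by
    simpa [Finset.sum_indicator_subset _ s.subset_univ] using hw₁
  refine ⟨(s : Set ι).indicator w, fun i => ?_, hw₁', ?_⟩
  · by_cases hi : i ∈ s <;> simp [hi, hw₀]
  · rw [Finset.affineCombination_indicator_subset _ _ s.subset_univ,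
      Finset.affineCombination_eq_linear_combination _ _ _ hw₁']

lemma exists_nat_ge_one_div_two_mul {x : ℝ} (hx : 0 < x) :
    ∃ N : ℕ, 1 / (2 * x) ≤ N ∧ ∀ n < N, n * x ≤ 1 / 2 := by
  refine ⟨⌊1 / (2 * x)⌋₊ + 1, by push_cast; exact (Nat.lt_floor_add_one _).le, fun n hn => ?_⟩
  have hn' : (n : ℝ) ≤ 1 / (2 * x) := (Nat.le_floor_iff (by positivity)).1 (Nat.lt_succ_iff.1 hn)
  calc n * x ≤ 1 / (2 * x) * x := by gcongr
    _ = 1 / 2 := by field_simp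

section ScaledBox

variable {ι : Type*}

def scaledBox (a : ι → ℝ) (δ t : ℝ) : Set (ι → ℝ) :=
  univ.pi fun k => Ico (t * a k) (t * (a k + δ))

variable {a g : ι → ℝ} {δ t : ℝ}

lemma measurableSet_scaledBox [Countable ι] (a : ι → ℝ) (δ t : ℝ) :
    MeasurableSet (scaledBox a δ t) :=
  MeasurableSet.univ_pi fun _ => measurableSet_Ico

lemma nonneg_of_mem_scaledBox (ha : ∀ k, 0 ≤ a k) (ht : 0 ≤ t) (hg : g ∈ scaledBox a δ t)
    (k : ι) : 0 ≤ g k :=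
  (mul_nonneg ht (ha k)).trans (hg k (mem_univ k)).1

lemma le_sum_of_mem_scaledBox [Fintype ι] (ha₁ : ∑ k, a k = 1) (hg : g ∈ scaledBox a δ t) :
    t ≤ ∑ k, g k := by
  simpa [← Finset.mul_sum, ha₁] using
    Finset.sum_le_sum fun k (_ : k ∈ Finset.univ) => (hg k (mem_univ k)).1

lemma disjoint_scaledBox {r t' : ℝ} (k₀ : ι) (ha : 0 ≤ a k₀) (hk₀ : a k₀ + δ ≤ r * a k₀)
    (ht : 0 ≤ t) (htt' : t * r ≤ t') : Disjoint (scaledBox a δ t) (scaledBox a δ t') := by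
  refine disjoint_univ_pi.2 ⟨k₀, disjoint_left.2 fun x hx hx' => ?_⟩
  have h₁ := mul_le_mul_of_nonneg_left hk₀ ht
  have h₂ := mul_le_mul_of_nonneg_right htt' ha
  linarith [hx.2, hx'.1]

lemma pairwise_disjoint_scaledBox_pow {r : ℝ} (k₀ : ι) (ha : 0 ≤ a k₀)
    (hk₀ : a k₀ + δ ≤ r * a k₀) (hr : 1 ≤ r) :
    Pairwise (Disjoint on fun n : ℕ => scaledBox a δ (r ^ n)) :=
  (pairwise_disjoint_on _).2 fun _ _ hij => disjoint_scaledBox k₀ ha hk₀ (by positivity)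
    (by rw [← pow_succ]; exact pow_le_pow_right₀ hr hij)

lemma abs_div_sum_sub_le_of_mem_scaledBox [Fintype ι] (ha : ∀ k, 0 ≤ a k) (ha₁ : ∑ k, a k = 1)
    (hδ : 0 ≤ δ) (ht : 0 < t) (hg : g ∈ scaledBox a δ t) (k : ι) :
    |g k / ∑ j, g j - a k| ≤ Fintype.card ι * δ := by
  have hlo : t * a k ≤ g k := (hg k (mem_univ k)).1
  have hhi : g k < t * (a k + δ) := (hg k (mem_univ k)).2
  set S := ∑ j, g j
  set n : ℝ := (Fintype.card ι : ℝ)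
  have hS_lo : t ≤ S := le_sum_of_mem_scaledBox ha₁ hg
  have hS_hi : S ≤ t * (1 + n * δ) := by
    have := Finset.sum_le_sum fun j (_ : j ∈ Finset.univ) => (hg j (mem_univ j)).2.le
    simpa [← Finset.mul_sum, Finset.sum_add_distrib, ha₁, n] using this
  have hS : 0 < S := ht.trans_le hS_lo
  have hn : 1 ≤ n := by
    simpa [n, Nat.one_le_iff_ne_zero] using (Fintype.card_pos_iff.2 ⟨k⟩).ne'
  have hak : a k ≤ 1 := ha₁ ▸ Finset.single_le_sum (fun j _ => ha j) (Finset.mem_univ k)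
  rw [abs_le, le_sub_iff_add_le, sub_le_iff_le_add', le_div_iff₀ hS, div_le_iff₀ hS]
  constructor
  · nlinarith [mul_le_mul_of_nonneg_left hS_hi (ha k),
      mul_le_mul_of_nonneg_left hS_lo (mul_nonneg (by positivity : (0:ℝ) ≤ n) hδ),
      mul_le_mul_of_nonneg_left hak ht.le]
  · nlinarith [mul_le_mul_of_nonneg_left hS_lo (add_nonneg (ha k) hδ),
      mul_le_mul_of_nonneg_right hn (mul_nonneg hδ hS.le)]

lemma sum_div_sum_smul_mem_ball_inter_convexHull [Fintype ι] {E : Type*}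
    [SeminormedAddCommGroup E] [NormedSpace ℝ E] {v : ι → E} {ε : ℝ} (ha : ∀ k, 0 ≤ a k)
    (ha₁ : ∑ k, a k = 1) (hv : ∀ k, ‖v k‖ ≤ 1) (hδ : 0 ≤ δ) (ht : 0 < t)
    (hε : Fintype.card ι * (Fintype.card ι * δ) < ε) (hg : g ∈ scaledBox a δ t) :
    ∑ k, (g k / ∑ j, g j) • v k ∈ Metric.ball (∑ k, a k • v k) ε ∩ convexHull ℝ (range v) := by
  have hS : 0 < ∑ j, g j := ht.trans_le (le_sum_of_mem_scaledBox ha₁ hg)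
  refine ⟨(dist_sum_smul_le (abs_div_sum_sub_le_of_mem_scaledBox ha ha₁ hδ ht hg) hv).trans_lt hε,
    mem_convexHull_of_exists_fintype _ v
      (fun k => div_nonneg (nonneg_of_mem_scaledBox ha ht.le hg k) hS.le)
      (by rw [← Finset.sum_div, div_self hS.ne']) (fun k => mem_range_self k) rfl⟩

lemma exists_pi_gammaMeasure_scaledBox_ge [Fintype ι] {α : ℝ} (hα : 0 < α) :
    ∃ c > 0, ∀ (a : ι → ℝ) (δ t : ℝ), (∀ k, 0 ≤ a k) → (∀ k, a k ≤ 1) → 0 < δ → δ ≤ 1 →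
      1 ≤ t → t ≤ 2 → ENNReal.ofReal (c * δ ^ (max α 1 * Fintype.card ι)) ≤
        Measure.pi (fun _ : ι => gammaMeasure α 1) (scaledBox a δ t) := by
  have := isProbabilityMeasure_gammaMeasure hα one_pos
  obtain ⟨c, hc, hgamma⟩ := exists_gammaMeasure_Ico_ge hα
  refine ⟨c ^ Fintype.card ι, by positivity, fun a δ t ha₀ ha₁ hδ₀ hδ₁ ht₁ ht₂ => ?_⟩
  have hfactor (k : ι) : ENNReal.ofReal (c * δ ^ max α 1) ≤
      gammaMeasure α 1 (Ico (t * a k) (t * (a k + δ))) := by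
    rw [mul_add]
    refine le_trans (ENNReal.ofReal_le_ofReal ?_)
      (hgamma _ _ (mul_nonneg (by linarith) (ha₀ k)) (by positivity) (by nlinarith [ha₀ k, ha₁ k]))
    gcongr
    exact le_mul_of_one_le_left hδ₀.le ht₁
  calc ENNReal.ofReal (c ^ Fintype.card ι * δ ^ (max α 1 * Fintype.card ι))
      = ∏ _k : ι, ENNReal.ofReal (c * δ ^ max α 1) := by
        rw [Finset.prod_const, Finset.card_univ, ← ENNReal.ofReal_pow (by positivity), mul_pow,
          rpow_mul hδ₀.le, rpow_natCast]
    _ ≤ ∏ k, gammaMeasure α 1 (Ico (t * a k) (t * (a k + δ))) :=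
        Finset.prod_le_prod' fun k _ => hfactor k
    _ = _ := (Measure.pi_pi _ _).symm

lemma exists_pi_gammaMeasure_biUnion_scaledBox_ge [Fintype ι] {α : ℝ} (hα : 0 < α) :
    ∃ c > 0, ∀ (a : ι → ℝ) (δ : ℝ) (N : ℕ), (∀ k, 0 ≤ a k) → ∑ k, a k = 1 → 0 < δ → δ ≤ 1 →
      (∀ n < N, n * (Fintype.card ι * δ) ≤ 1 / 2) →
      ENNReal.ofReal (N * (c * δ ^ (max α 1 * Fintype.card ι))) ≤
        Measure.pi (fun _ : ι => gammaMeasure α 1)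
          (⋃ n ∈ Finset.range N, scaledBox a δ ((1 + Fintype.card ι * δ) ^ n)) := by
  obtain ⟨c, hc, hbox⟩ := exists_pi_gammaMeasure_scaledBox_ge (ι := ι) hα
  refine ⟨c, hc, fun a δ N ha₀ ha₁ hδ hδ₁ hN => ?_⟩
  have hnδ : 0 ≤ (Fintype.card ι : ℝ) * δ := by positivity
  have ha_le (k : ι) : a k ≤ 1 :=
    ha₁ ▸ Finset.single_le_sum (fun j _ => ha₀ j) (Finset.mem_univ k)
  obtain ⟨k₀, -, hk₀⟩ : ∃ k₀ ∈ Finset.univ, (1 : ℝ) ≤ Fintype.card ι * a k₀ :=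
    Finset.exists_le_of_sum_le (Finset.nonempty_of_sum_ne_zero (ha₁ ▸ one_ne_zero))
      (by simp [← Finset.mul_sum, ha₁])
  have hdisj := pairwise_disjoint_scaledBox_pow (δ := δ) k₀ (ha₀ k₀)
    (by nlinarith [mul_le_mul_of_nonneg_left hk₀ hδ.le]) (le_add_of_nonneg_right hnδ)
  calc ENNReal.ofReal (N * (c * δ ^ (max α 1 * Fintype.card ι)))
      = ∑ _n ∈ Finset.range N, ENNReal.ofReal (c * δ ^ (max α 1 * Fintype.card ι)) := by
        rw [ENNReal.ofReal_mul (by positivity), ENNReal.ofReal_natCast]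
        simp
    _ ≤ ∑ n ∈ Finset.range N, Measure.pi (fun _ : ι => gammaMeasure α 1)
          (scaledBox a δ ((1 + Fintype.card ι * δ) ^ n)) :=
        Finset.sum_le_sum fun n hn => hbox a δ _ ha₀ ha_le hδ hδ₁
          (one_le_pow₀ (le_add_of_nonneg_right hnδ))
          (one_add_pow_le_two hnδ (hN n (Finset.mem_range.1 hn)))
    _ = _ := (measure_biUnion_finset (hdisj.set_pairwise _)
          fun n _ => measurableSet_scaledBox _ _ _).symm

end ScaledBox

lemma map_dirichletSym_apply {E : Type*} [MeasurableSpace E] {K : ℕ} (α : ℝ)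
    {f : (Fin K → ℝ) → E} (hf : Measurable f) {s : Set E} (hs : MeasurableSet s) :
    Measure.map f (dirichletSym K α) s =
      Measure.pi (fun _ => gammaMeasure α 1) ((fun g => f fun k => g k / ∑ j, g j) ⁻¹' s) := by
  have hnorm : Measurable fun g : Fin K → ℝ => fun k => g k / ∑ j, g j := by fun_prop
  rw [dirichletSym, Measure.map_map hf hnorm, Measure.map_apply (hf.comp hnorm) hs]
  rfl

theorem exists_map_dirichletSym_ball_inter_convexHull_ge {E : Type*} [NormedAddCommGroup E]
    [NormedSpace ℝ E] [MeasurableSpace E] [BorelSpace E] {K : ℕ} {α : ℝ} (hα : 0 < α)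
    {θ : Fin K → E} (hθ : ∀ k, ‖θ k‖ ≤ 1) :
    ∃ C > 0, ∀ η ∈ convexHull ℝ (range θ), ∀ ε : ℝ, 0 < ε → ε < 1 / K →
      ENNReal.ofReal (C * ε ^ (max α 1 * K - 1)) ≤
        Measure.map (fun β : Fin K → ℝ => ∑ k, β k • θ k) (dirichletSym K α)
          (Metric.ball η ε ∩ convexHull ℝ (range θ)) := by
  rcases K.eq_zero_or_pos with rfl | hK
  · exact ⟨1, one_pos, fun _ _ ε hε hεK => absurd hεK (by simp; linarith)⟩
  obtain ⟨c, hc, hunion⟩ := exists_pi_gammaMeasure_biUnion_scaledBox_ge (ι := Fin K) hα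
  simp only [Fintype.card_fin] at hunion
  set m := max α 1
  have hK' : (0 : ℝ) < K := by exact_mod_cast hK
  refine ⟨2 * K * c / (4 * K ^ 2) ^ (m * K), by positivity, fun η hη ε hε hεK => ?_⟩
  obtain ⟨a, ha₀, ha₁, rfl⟩ := exists_sum_smul_eq_of_mem_convexHull_range hη
  set δ := ε / (4 * K ^ 2)
  have hδ : 0 < δ := by positivity
  have hKδ : K * δ = ε / (4 * K) := by simp only [δ]; field_simp
  have hδ₁ : δ ≤ 1 := by
    rw [div_le_one (by positivity)]
    rw [lt_div_iff₀ hK'] at hεK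
    nlinarith [(Nat.one_le_cast.2 hK : (1 : ℝ) ≤ K)]
  obtain ⟨N, hN, hnN⟩ := exists_nat_ge_one_div_two_mul (by positivity : 0 < (K : ℝ) * δ)
  have hmeas : MeasurableSet (Metric.ball (∑ k, a k • θ k) ε ∩ convexHull ℝ (range θ)) :=
    Metric.isOpen_ball.measurableSet.inter
      (((finite_range θ).isCompact_convexHull ℝ).isClosed.measurableSet)
  have hL : Measurable fun β : Fin K → ℝ => ∑ k, β k • θ k :=
    (by fun_prop : Continuous _).measurable
  rw [map_dirichletSym_apply α hL hmeas]
  calc ENNReal.ofReal (2 * K * c / (4 * K ^ 2) ^ (m * K) * ε ^ (m * K - 1))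
      ≤ ENNReal.ofReal (N * (c * δ ^ (m * K))) := by
        refine ENNReal.ofReal_le_ofReal ?_
        calc 2 * K * c / (4 * K ^ 2) ^ (m * K) * ε ^ (m * K - 1)
            = 1 / (2 * (K * δ)) * (c * δ ^ (m * K)) := by
              rw [hKδ, div_rpow hε.le (by positivity), rpow_sub_one hε.ne']
              field_simp
              ring
          _ ≤ N * (c * δ ^ (m * K)) := by gcongr
    _ ≤ _ := hunion a δ N ha₀ ha₁ hδ hδ₁ hnN
    _ ≤ _ := measure_mono <| iUnion₂_subset fun n _ =>
        fun g hg => sum_div_sum_smul_mem_ball_inter_convexHull ha₀ ha₁ hθ hδ.le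
          (by positivity) (by rw [Fintype.card_fin, hKδ]; field_simp; linarith) hg

theorem dirichlet_pushforward_small_ball_mass_general {V K : ℕ} (α : ℝ) (hα : 0 < α)
    (θ : Fin K → EuclideanSpace ℝ (Fin V))
    (hθ : ∀ k, (∀ v, 0 ≤ θ k v) ∧ ∑ v, θ k v = 1) :
    ∃ C : ℝ, 0 < C ∧
      ∀ η ∈ convexHull ℝ (Set.range θ), ∀ ε : ℝ, 0 < ε → ε < 1 / K →
        (α ≤ 1 →
          ENNReal.ofReal (C * ε ^ ((K : ℝ) - 1)) ≤
            (Measure.map (fun β : Fin K → ℝ => ∑ k, β k • θ k) (dirichletSym K α))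
              (Metric.ball η ε ∩ convexHull ℝ (Set.range θ))) ∧
        (1 < α →
          ENNReal.ofReal (C * ε ^ (α * K - 1)) ≤
            (Measure.map (fun β : Fin K → ℝ => ∑ k, β k • θ k) (dirichletSym K α))
              (Metric.ball η ε ∩ convexHull ℝ (Set.range θ))) := by
  obtain ⟨C, hC, hmass⟩ := exists_map_dirichletSym_ball_inter_convexHull_ge hα
    fun k => EuclideanSpace.norm_le_one_of_nonneg_of_sum_eq_one (hθ k).1 (hθ k).2
  refine ⟨C, hC, fun η hη ε hε hεK => ⟨fun h => ?_, fun h => ?_⟩⟩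
  · simpa only [max_eq_right h, one_mul] using hmass η hη ε hε hεK
  · simpa only [max_eq_left h.le] using hmass η hη ε hε hεK

theorem dirichlet_pushforward_small_ball_mass {V K : ℕ} (α : ℝ) (hα : 0 < α)
    (θ : Fin K → EuclideanSpace ℝ (Fin V))
    (hθ : ∀ k, (∀ v, 0 ≤ θ k v) ∧ ∑ v, θ k v = 1)
    (hind : AffineIndependent ℝ θ) :
    ∃ C : ℝ, 0 < C ∧
      ∀ η ∈ convexHull ℝ (Set.range θ), ∀ ε : ℝ, 0 < ε → ε < 1 / K →
        (α ≤ 1 →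
          ENNReal.ofReal (C * ε ^ ((K : ℝ) - 1)) ≤
            (Measure.map (fun β : Fin K → ℝ => ∑ k, β k • θ k) (dirichletSym K α))
              (Metric.ball η ε ∩ convexHull ℝ (Set.range θ))) ∧
        (1 < α →
          ENNReal.ofReal (C * ε ^ (α * K - 1)) ≤
            (Measure.map (fun β : Fin K → ℝ => ∑ k, β k • θ k) (dirichletSym K α))
              (Metric.ball η ε ∩ convexHull ℝ (Set.range θ))) :=
  dirichlet_pushforward_small_ball_mass_general α hα θ hθ
end

section
/- Let G = Σ_{i=1}^I π_i G_i and G' = Σ_{i=1}^I π'_i G'_i be mixtures of probability measures on R^d, where each G_i is absolutely continuous with respect to the Hausdorff measure on an affine subspace A_i (with G_i supported on a compact convex subset of A_i of full dimension in A_i), each π_i > 0, and similarly for G'. Suppose all A_i are pairwise distinct and no A_i is contained in A_j for i ≠ j, and the same for the A'_i. If G = G', then I-component-wise identification holds: there is a permutation σ of [I] such that A_i = A'_{σ(i)}, G_i = G'_{σ(i)}, and π_i = π'_{σ(i)} for all i. -/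
/-!
A component `Gᵢ` lives on `Aᵢ` and, being absolutely continuous with respect to the
`dim Aᵢ`-dimensional Hausdorff measure, charges no affine subspace `B` not containing `Aᵢ`:
`B ∩ Aᵢ` is then a flat of smaller dimension, hence `μH[dim Aᵢ]`-null. Consequently the
mixture restricted to `Aᵢ` is exactly `πᵢ Gᵢ`, so it charges `Aᵢ`, so some `G'ⱼ` charges `Aᵢ`,
i.e. `A'ⱼ ≤ Aᵢ`; symmetrically `Aₖ ≤ A'ⱼ` for some `k`, and the antichain condition forces
`k = i` and `Aᵢ = A'ⱼ`. Restricting both mixtures to this common subspace gives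
`πᵢ Gᵢ = π'ⱼ G'ⱼ`, and evaluating at the whole space separates weight and measure.
-/

open MeasureTheory Module Set
open scoped ENNReal

theorem exists_eq_of_forall_exists_le {α ι ι' : Type*} [PartialOrder α] {a : ι → α} {b : ι' → α}
    (ha : ∀ i j, i ≠ j → ¬ a i ≤ a j) (hab : ∀ i, ∃ j, b j ≤ a i) (hba : ∀ j, ∃ i, a i ≤ b j)
    (i : ι) : ∃ j, a i = b j := by
  obtain ⟨j, hji⟩ := hab i
  obtain ⟨i', hij⟩ := hba j
  obtain rfl : i' = i := not_not.1 fun h => ha i' i h (hij.trans hji)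
  exact ⟨j, le_antisymm hij hji⟩

theorem exists_perm_of_forall_exists_eq {α ι : Type*} [Finite ι] {a b : ι → α}
    (ha : Function.Injective a) (h : ∀ i, ∃ j, a i = b j) :
    ∃ σ : Equiv.Perm ι, ∀ i, a i = b (σ i) := by
  choose f hf using h
  have hf_inj : Function.Injective f := fun i j hij => ha (by rw [hf i, hf j, hij])
  exact ⟨Equiv.ofBijective f hf_inj.bijective_of_finite, hf⟩

namespace AffineSubspace

section Carries

variable {k V P ι : Type*} [Ring k] [AddCommGroup V] [Module k V] [AddTorsor V P]
  [MeasurableSpace P]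

/-- The only consequence of `μ ≪ μH[dim A]` that the identification argument needs. -/
structure Carries (A : AffineSubspace k P) (μ : Measure P) : Prop where
  measure_compl : μ (A : Set P)ᶜ = 0
  measure_eq_zero_of_not_le : ∀ B : AffineSubspace k P, ¬ A ≤ B → μ B = 0

theorem Carries.le_of_measure_ne_zero {A B : AffineSubspace k P} {μ : Measure P}
    (hA : A.Carries μ) (hB : μ B ≠ 0) : A ≤ B :=
  not_not.1 fun h => hB (hA.measure_eq_zero_of_not_le B h)

variable [Fintype ι] {w w' : ι → ℝ≥0∞} {μ μ' : ι → Measure P} {A A' : ι → AffineSubspace k P}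

theorem restrict_sum_smul_eq_smul (hA : ∀ i, (A i).Carries (μ i))
    (hanti : ∀ i j, i ≠ j → ¬ A i ≤ A j) (i : ι) :
    (∑ j, w j • μ j).restrict (A i) = w i • μ i := by
  classical
  rw [← Measure.restrictₗ_apply, map_sum, Finset.sum_eq_single i]
  · rw [map_smul, Measure.restrictₗ_apply]
    exact congrArg _ (Measure.restrict_eq_self_of_ae_mem (ae_iff.2 (hA i).measure_compl))
  · intro j _ hji
    rw [map_smul, Measure.restrictₗ_apply,
      Measure.restrict_eq_zero.2 ((hA j).measure_eq_zero_of_not_le _ (hanti j i hji)), smul_zero]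
  · exact fun h => (h (Finset.mem_univ i)).elim

theorem exists_le_of_sum_smul_eq (hA : ∀ i, (A i).Carries (μ i))
    (hA' : ∀ i, (A' i).Carries (μ' i)) (hanti : ∀ i j, i ≠ j → ¬ A i ≤ A j)
    (hw : ∀ i, w i ≠ 0) (hμ : ∀ i, μ i ≠ 0)
    (heq : ∑ i, w i • μ i = ∑ i, w' i • μ' i) (i : ι) : ∃ j, A' j ≤ A i := by
  have hne : (∑ j, w' j • μ' j) (A i) ≠ 0 := by
    rw [← heq, Ne, ← Measure.restrict_eq_zero, restrict_sum_smul_eq_smul hA hanti]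
    simp [hw i, hμ i]
  rw [Measure.finsetSum_apply] at hne
  obtain ⟨j, -, hj⟩ := Finset.exists_ne_zero_of_sum_ne_zero hne
  exact ⟨j, (hA' j).le_of_measure_ne_zero (right_ne_zero_of_mul hj)⟩

theorem exists_perm_of_sum_smul_eq (hA : ∀ i, (A i).Carries (μ i))
    (hA' : ∀ i, (A' i).Carries (μ' i)) (hanti : ∀ i j, i ≠ j → ¬ A i ≤ A j)
    (hanti' : ∀ i j, i ≠ j → ¬ A' i ≤ A' j) (hw : ∀ i, w i ≠ 0) (hw' : ∀ i, w' i ≠ 0)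
    (hμ : ∀ i, μ i ≠ 0) (hμ' : ∀ i, μ' i ≠ 0) (heq : ∑ i, w i • μ i = ∑ i, w' i • μ' i) :
    ∃ σ : Equiv.Perm ι, ∀ i, A i = A' (σ i) ∧ w i • μ i = w' (σ i) • μ' (σ i) := by
  have hinj : Function.Injective A := fun i j h => not_not.1 fun hij => hanti i j hij h.le
  obtain ⟨σ, hσ⟩ := exists_perm_of_forall_exists_eq hinj <| exists_eq_of_forall_exists_le hanti
    (exists_le_of_sum_smul_eq hA hA' hanti hw hμ heq)
    (exists_le_of_sum_smul_eq hA' hA hanti' hw' hμ' heq.symm)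
  refine ⟨σ, fun i => ⟨hσ i, ?_⟩⟩
  calc w i • μ i = (∑ j, w j • μ j).restrict (A i) := (restrict_sum_smul_eq_smul hA hanti i).symm
    _ = (∑ j, w' j • μ' j).restrict (A' (σ i)) := by rw [heq, hσ i]
    _ = w' (σ i) • μ' (σ i) := restrict_sum_smul_eq_smul hA' hanti' (σ i)

end Carries

theorem finrank_direction_inf_lt {k V P : Type*} [DivisionRing k] [AddCommGroup V] [Module k V]
    [AddTorsor V P] [FiniteDimensional k V] {B C : AffineSubspace k P}
    (hne : ((B ⊓ C : AffineSubspace k P) : Set P).Nonempty) (h : ¬ C ≤ B) :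
    finrank k (B ⊓ C).direction < finrank k C.direction := by
  refine Submodule.finrank_lt_finrank_of_lt (lt_of_le_of_ne (direction_le inf_le_right) ?_)
  intro hdir
  obtain ⟨p, hp⟩ := hne
  exact h (ext_of_direction_eq hdir ⟨p, hp, hp.2⟩ ▸ inf_le_left)

variable {E : Type*} [NormedAddCommGroup E] [NormedSpace ℝ E] [FiniteDimensional ℝ E]
  [MeasurableSpace E] [BorelSpace E]

theorem hausdorffMeasure_eq_zero_of_finrank_direction_lt (B : AffineSubspace ℝ E) {n : ℕ}
    (h : finrank ℝ B.direction < n) : μH[n] (B : Set E) = 0 := by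
  rcases (B : Set E).eq_empty_or_nonempty with hB | hB
  · simp [hB]
  · have hdim : dimH (B : Set E) = finrank ℝ B.direction := by
      rw [Real.Convex.dimH_eq_finrank_vectorSpan B.convex hB, ← direction_eq_vectorSpan]
    have := hausdorffMeasure_of_dimH_lt (d := n) (hdim.trans_lt (by exact_mod_cast h))
    simpa using this

theorem carries_of_absolutelyContinuous {A : AffineSubspace ℝ E} {μ : Measure E}
    (hac : μ ≪ μH[finrank ℝ A.direction]) (hA : μ (A : Set E)ᶜ = 0) : A.Carries μ := by
  refine ⟨hA, fun B hAB => ?_⟩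
  have hinter : μ ((B ⊓ A : AffineSubspace ℝ E) : Set E) = 0 := by
    rcases ((B ⊓ A : AffineSubspace ℝ E) : Set E).eq_empty_or_nonempty with h | h
    · simp [h]
    · exact hac <|
        hausdorffMeasure_eq_zero_of_finrank_direction_lt _ (finrank_direction_inf_lt h hAB)
  refine measure_mono_null (fun x hx => ?_) (measure_union_null hinter hA)
  by_cases hxA : x ∈ (A : Set E)
  exacts [Or.inl ⟨hx, hxA⟩, Or.inr hxA]

end AffineSubspace

theorem MeasureTheory.Measure.eq_and_eq_of_smul_eq_smul {X : Type*} [MeasurableSpace X]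
    {μ ν : Measure X} [IsProbabilityMeasure μ] [IsProbabilityMeasure ν] {a b : ℝ≥0∞}
    (ha₀ : a ≠ 0) (ha : a ≠ ∞) (h : a • μ = b • ν) : a = b ∧ μ = ν := by
  obtain rfl : a = b := by simpa using congrArg (fun m : Measure X => m univ) h
  refine ⟨rfl, Measure.ext fun s _ => ?_⟩
  have hs := congrArg (fun m : Measure X => m s) h
  simp only [Measure.smul_apply, smul_eq_mul] at hs
  exact (ENNReal.mul_right_inj ha₀ ha).1 hs

theorem mixture_of_measures_on_affine_subspaces_identifiable_general {d I : ℕ}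
    (G G' : Fin I → Measure (Fin d → ℝ))
    (A A' : Fin I → AffineSubspace ℝ (Fin d → ℝ))
    (S S' : Fin I → Set (Fin d → ℝ))
    (π π' : Fin I → ℝ)
    (hprob : ∀ i, IsProbabilityMeasure (G i))
    (hprob' : ∀ i, IsProbabilityMeasure (G' i))
    (hS : ∀ i, IsCompact (S i) ∧ Convex ℝ (S i) ∧ S i ⊆ (A i : Set (Fin d → ℝ)) ∧
      affineSpan ℝ (S i) = A i)
    (hS' : ∀ i, IsCompact (S' i) ∧ Convex ℝ (S' i) ∧ S' i ⊆ (A' i : Set (Fin d → ℝ)) ∧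
      affineSpan ℝ (S' i) = A' i)
    (hsupp : ∀ i, G i (S i)ᶜ = 0) (hsupp' : ∀ i, G' i (S' i)ᶜ = 0)
    (hac : ∀ i, G i ≪ μH[(Module.finrank ℝ (A i).direction : ℝ)])
    (hac' : ∀ i, G' i ≪ μH[(Module.finrank ℝ (A' i).direction : ℝ)])
    (hπ : ∀ i, 0 < π i) (hπ' : ∀ i, 0 < π' i)
    (hdist : ∀ i j, i ≠ j → ¬ A i ≤ A j)
    (hdist' : ∀ i j, i ≠ j → ¬ A' i ≤ A' j)
    (heq : (∑ i, ENNReal.ofReal (π i) • G i) = ∑ i, ENNReal.ofReal (π' i) • G' i) :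
    ∃ σ : Equiv.Perm (Fin I), ∀ i,
      A i = A' (σ i) ∧ G i = G' (σ i) ∧ π i = π' (σ i) := by
  have hC : ∀ i, (A i).Carries (G i) := fun i => AffineSubspace.carries_of_absolutelyContinuous
    (hac i) (measure_mono_null (compl_subset_compl.2 (hS i).2.2.1) (hsupp i))
  have hC' : ∀ i, (A' i).Carries (G' i) := fun i => AffineSubspace.carries_of_absolutelyContinuous
    (hac' i) (measure_mono_null (compl_subset_compl.2 (hS' i).2.2.1) (hsupp' i))
  have hw : ∀ i, ENNReal.ofReal (π i) ≠ 0 := fun i => (ENNReal.ofReal_pos.2 (hπ i)).ne'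
  have hw' : ∀ i, ENNReal.ofReal (π' i) ≠ 0 := fun i => (ENNReal.ofReal_pos.2 (hπ' i)).ne'
  obtain ⟨σ, hσ⟩ := AffineSubspace.exists_perm_of_sum_smul_eq hC hC' hdist hdist' hw hw'
    (fun i => (hprob i).ne_zero) (fun i => (hprob' i).ne_zero) heq
  refine ⟨σ, fun i => ?_⟩
  have := hprob i
  have := hprob' (σ i)
  obtain ⟨hAi, hGi⟩ := hσ i
  obtain ⟨hπi, hGi⟩ := Measure.eq_and_eq_of_smul_eq_smul (hw i) ENNReal.ofReal_ne_top hGi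
  exact ⟨hAi, hGi, (ENNReal.ofReal_eq_ofReal_iff (hπ i).le (hπ' _).le).1 hπi⟩

theorem mixture_of_measures_on_affine_subspaces_identifiable {d I : ℕ}
    (G G' : Fin I → Measure (Fin d → ℝ))
    (A A' : Fin I → AffineSubspace ℝ (Fin d → ℝ))
    (S S' : Fin I → Set (Fin d → ℝ))
    (π π' : Fin I → ℝ)
    (hprob : ∀ i, IsProbabilityMeasure (G i))
    (hprob' : ∀ i, IsProbabilityMeasure (G' i))
    (hS : ∀ i, IsCompact (S i) ∧ Convex ℝ (S i) ∧ S i ⊆ (A i : Set (Fin d → ℝ)) ∧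
      affineSpan ℝ (S i) = A i)
    (hS' : ∀ i, IsCompact (S' i) ∧ Convex ℝ (S' i) ∧ S' i ⊆ (A' i : Set (Fin d → ℝ)) ∧
      affineSpan ℝ (S' i) = A' i)
    (hsupp : ∀ i, G i (S i)ᶜ = 0) (hsupp' : ∀ i, G' i (S' i)ᶜ = 0)
    (hac : ∀ i, G i ≪ μH[(Module.finrank ℝ (A i).direction : ℝ)])
    (hac' : ∀ i, G' i ≪ μH[(Module.finrank ℝ (A' i).direction : ℝ)])
    (hπ : ∀ i, 0 < π i) (hπ' : ∀ i, 0 < π' i)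
    (hπs : ∑ i, π i = 1) (hπ's : ∑ i, π' i = 1)
    (hdist : ∀ i j, i ≠ j → ¬ A i ≤ A j)
    (hdist' : ∀ i j, i ≠ j → ¬ A' i ≤ A' j)
    (heq : (∑ i, ENNReal.ofReal (π i) • G i) = ∑ i, ENNReal.ofReal (π' i) • G' i) :
    ∃ σ : Equiv.Perm (Fin I), ∀ i,
      A i = A' (σ i) ∧ G i = G' (σ i) ∧ π i = π' (σ i) :=
  mixture_of_measures_on_affine_subspaces_identifiable_general G G' A A' S S' π π' hprob hprob' hS
    hS' hsupp hsupp' hac hac' hπ hπ' hdist hdist' heq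
end
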